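/- Let Ω ⊆ ℝ² be open and connected and let ρ : Ω → (0,∞) be a smooth function satisfying the timelike-minimal planar-curvature-line system on Ω, and suppose additionally that ρ_xx − ρ_yy vanishes identically on Ω. Then ρ_x and ρ_y are constant on Ω and satisfy ρ_x² − ρ_y² = −1; in particular there exist φ ∈ ℝ and ε ∈ {−1, 1} such that ρ_x ≡ sinh φ and ρ_y ≡ ε·cosh φ on Ω. -/

import Mathlib

noncomputable section

/-- Partial derivative in the first (x) variable. -/
def pdx {E : Type*} [NormedAddCommGroup E] [NormedSpace ℝ E]
    (f : ℝ × ℝ → E) (p : ℝ × ℝ) : E :=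
  deriv (fun t => f (t, p.2)) p.1

/-- Partial derivative in the second (y) variable. -/
def pdy {E : Type*} [NormedAddCommGroup E] [NormedSpace ℝ E]
    (f : ℝ × ℝ → E) (p : ℝ × ℝ) : E :=
  deriv (fun t => f (p.1, t)) p.2

lemma pdx_eq {f : ℝ × ℝ → ℝ} {p : ℝ × ℝ} (h : DifferentiableAt ℝ f p) :
    pdx f p = fderiv ℝ f p (1, 0) := by
  have h1 : HasDerivAt (fun t : ℝ => (t, p.2)) ((1 : ℝ), (0 : ℝ)) p.1 :=
    (hasDerivAt_id p.1).prodMk (hasDerivAt_const p.1 p.2)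
  have h2 : HasDerivAt (fun t : ℝ => f (t, p.2)) (fderiv ℝ f p (1, 0)) p.1 := by
    have := (h.hasFDerivAt).comp_hasDerivAt p.1 (by simpa using h1)
    exact this
  exact h2.deriv

lemma pdy_eq {f : ℝ × ℝ → ℝ} {p : ℝ × ℝ} (h : DifferentiableAt ℝ f p) :
    pdy f p = fderiv ℝ f p (0, 1) := by
  have h1 : HasDerivAt (fun t : ℝ => (p.1, t)) ((0 : ℝ), (1 : ℝ)) p.2 :=
    (hasDerivAt_const p.2 p.1).prodMk (hasDerivAt_id p.2)
  have h2 : HasDerivAt (fun t : ℝ => f (p.1, t)) (fderiv ℝ f p (0, 1)) p.2 := by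
    have := (h.hasFDerivAt).comp_hasDerivAt p.2 (by simpa using h1)
    exact this
  exact h2.deriv

lemma clm_zero (L : ℝ × ℝ →L[ℝ] ℝ) (h1 : L (1, 0) = 0) (h2 : L (0, 1) = 0) : L = 0 :=
  ContinuousLinearMap.ext fun x => by
    have hx : (x : ℝ × ℝ) = x.1 • ((1 : ℝ), (0 : ℝ)) + x.2 • ((0 : ℝ), (1 : ℝ)) := by
      simp [Prod.ext_iff]
    rw [hx, map_add, map_smul, map_smul, h1, h2]
    simp

lemma const_on_open_preconn {Ω : Set (ℝ × ℝ)} (hΩ : IsOpen Ω) (hconn : IsPreconnected Ω)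
    (f : ℝ × ℝ → ℝ) (hdiff : ∀ p ∈ Ω, DifferentiableAt ℝ f p)
    (h0 : ∀ p ∈ Ω, fderiv ℝ f p = 0) :
    ∀ p ∈ Ω, ∀ q ∈ Ω, f p = f q := by
  intro p hp q hq
  by_contra hne
  set S : Set (ℝ × ℝ) := {x | x ∈ Ω ∧ f x = f q} with hS
  set T : Set (ℝ × ℝ) := {x | x ∈ Ω ∧ f x ≠ f q} with hT
  have hSopen : IsOpen S := by
    rw [isOpen_iff_mem_nhds]
    rintro x ⟨hxΩ, hxv⟩
    rcases Metric.isOpen_iff.1 hΩ x hxΩ with ⟨r, hr, hball⟩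
    have hconv : Convex ℝ (Metric.ball x r) := convex_ball x r
    have hconst : ∀ y ∈ Metric.ball x r, f y = f x := by
      intro y hy
      refine hconv.is_const_of_fderivWithin_eq_zero (fun z hz => (hdiff z (hball hz)).differentiableWithinAt)
        (fun z hz => ?_) hy (Metric.mem_ball_self hr)
      rw [fderivWithin_of_isOpen Metric.isOpen_ball hz]
      exact h0 z (hball hz)
    have : Metric.ball x r ⊆ S := fun y hy => ⟨hball hy, by rw [hconst y hy, hxv]⟩
    exact Filter.mem_of_superset (Metric.ball_mem_nhds x hr) this
  have hTopen : IsOpen T := by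
    have : T = Ω ∩ f ⁻¹' ({f q}ᶜ) := by
      ext x; simp [hT, Set.mem_preimage]
    rw [this]
    exact ContinuousOn.isOpen_inter_preimage
      (fun z hz => (hdiff z hz).continuousAt.continuousWithinAt) hΩ (isOpen_compl_singleton)
  have hsub : Ω ⊆ S ∪ T := by
    intro x hx
    by_cases h : f x = f q
    · exact Or.inl ⟨hx, h⟩
    · exact Or.inr ⟨hx, h⟩
  have hne1 : (Ω ∩ S).Nonempty := ⟨q, hq, hq, rfl⟩
  have hne2 : (Ω ∩ T).Nonempty := ⟨p, hp, hp, hne⟩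
  rcases hconn S T hSopen hTopen hsub hne1 hne2 with ⟨x, _, ⟨_, h1⟩, ⟨_, h2⟩⟩
  exact h2 h1

set_option maxHeartbeats 1000000 in
/-- If ρ satisfies the timelike-minimal planar-curvature-line system on an open connected Ω
and ρ_xx − ρ_yy ≡ 0 there, then ρ_x and ρ_y are constant on Ω with ρ_x² − ρ_y² = −1;
in particular ρ_x ≡ sinh φ and ρ_y ≡ ε cosh φ for some φ ∈ ℝ, ε ∈ {−1, 1}. -/
theorem case2_constant_gradient
    (Ω : Set (ℝ × ℝ)) (hΩ : IsOpen Ω) (hΩconn : IsConnected Ω)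
    (ρ : ℝ × ℝ → ℝ) (hρ : ContDiffOn ℝ (⊤ : ℕ∞) ρ Ω)
    (hρpos : ∀ p ∈ Ω, 0 < ρ p)
    (hpde1 : ∀ p ∈ Ω,
      ρ p * (pdx (pdx ρ) p - pdy (pdy ρ) p) - ((pdx ρ p) ^ 2 - (pdy ρ p) ^ 2) - 1 = 0)
    (hpde2 : ∀ p ∈ Ω, pdy (pdx ρ) p = 0)
    (hbox : ∀ p ∈ Ω, pdx (pdx ρ) p - pdy (pdy ρ) p = 0) :
    (∀ p ∈ Ω, ∀ q ∈ Ω, pdx ρ p = pdx ρ q ∧ pdy ρ p = pdy ρ q) ∧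
    (∀ p ∈ Ω, (pdx ρ p) ^ 2 - (pdy ρ p) ^ 2 = -1) ∧
    ∃ (φ ε : ℝ), (ε = -1 ∨ ε = 1) ∧
      ∀ p ∈ Ω, pdx ρ p = Real.sinh φ ∧ pdy ρ p = ε * Real.cosh φ := by
  -- Part A : the algebraic constraint
  have key : ∀ p ∈ Ω, (pdx ρ p) ^ 2 - (pdy ρ p) ^ 2 = -1 := by
    intro p hp
    have h1 := hpde1 p hp
    rw [hbox p hp] at h1
    linear_combination -h1
  -- differentiability infrastructure
  have hdρ : ∀ p ∈ Ω, DifferentiableAt ℝ ρ p := fun p hp =>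
    (hρ.differentiableOn (by simp)).differentiableAt (hΩ.mem_nhds hp)
  have hdF : ∀ p ∈ Ω, DifferentiableAt ℝ (fderiv ℝ ρ) p := fun p hp =>
    ((hρ.contDiffAt (hΩ.mem_nhds hp)).fderiv_right ((by exact WithTop.coe_le_coe.2 le_top))).differentiableAt one_ne_zero
  set L1 : ((ℝ × ℝ) →L[ℝ] ℝ) →L[ℝ] ℝ :=
    ContinuousLinearMap.apply ℝ ℝ ((1 : ℝ), (0 : ℝ)) with hL1
  set L2 : ((ℝ × ℝ) →L[ℝ] ℝ) →L[ℝ] ℝ :=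
    ContinuousLinearMap.apply ℝ ℝ ((0 : ℝ), (1 : ℝ)) with hL2
  have huev : ∀ p ∈ Ω, pdx ρ =ᶠ[nhds p] fun q => fderiv ℝ ρ q (1, 0) := fun p hp =>
    Filter.eventually_of_mem (hΩ.mem_nhds hp) fun q hq => pdx_eq (hdρ q hq)
  have hvev : ∀ p ∈ Ω, pdy ρ =ᶠ[nhds p] fun q => fderiv ℝ ρ q (0, 1) := fun p hp =>
    Filter.eventually_of_mem (hΩ.mem_nhds hp) fun q hq => pdy_eq (hdρ q hq)
  -- the key vanishing of all second derivatives
  have hzero : ∀ p ∈ Ω, fderiv ℝ (pdx ρ) p = 0 ∧ fderiv ℝ (pdy ρ) p = 0 ∧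
      DifferentiableAt ℝ (pdx ρ) p ∧ DifferentiableAt ℝ (pdy ρ) p := by
    intro p hp
    set F2 : (ℝ × ℝ) →L[ℝ] (ℝ × ℝ) →L[ℝ] ℝ := fderiv ℝ (fderiv ℝ ρ) p with hF2
    have hsymm : ∀ v w : ℝ × ℝ, F2 v w = F2 w v := fun v w =>
      second_derivative_symmetric_of_eventually
        (Filter.eventually_of_mem (hΩ.mem_nhds hp) fun q hq => (hdρ q hq).hasFDerivAt)
        (hdF p hp).hasFDerivAt v w
    obtain ⟨A, hA1, hA2⟩ : ∃ A : (ℝ × ℝ) →L[ℝ] ℝ,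
        HasFDerivAt (pdx ρ) A p ∧ ∀ w, A w = F2 w (1, 0) := by
      refine ⟨L1.comp F2, ?_, fun w => by simp [L1]⟩
      exact (L1.hasFDerivAt.comp p (hdF p hp).hasFDerivAt).congr_of_eventuallyEq (huev p hp)
    obtain ⟨B, hB1, hB2⟩ : ∃ B : (ℝ × ℝ) →L[ℝ] ℝ,
        HasFDerivAt (pdy ρ) B p ∧ ∀ w, B w = F2 w (0, 1) := by
      refine ⟨L2.comp F2, ?_, fun w => by simp [L2]⟩
      exact (L2.hasFDerivAt.comp p (hdF p hp).hasFDerivAt).congr_of_eventuallyEq (hvev p hp)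
    -- e1 : A (0,1) = 0 from ρ_xy = 0
    have e1 : A (0, 1) = 0 := by
      have h := hpde2 p hp
      rwa [pdy_eq hA1.differentiableAt, hA1.fderiv] at h
    have hBA : B (1, 0) = A (0, 1) := by rw [hA2, hB2, hsymm]
    -- e2 : B (0,1) = 0 from differentiating the constraint in y
    have hvne : pdy ρ p ≠ 0 := by
      intro h
      have h2 := key p hp
      rw [h] at h2
      norm_num at h2
      linarith only [h2, sq_nonneg (pdx ρ p)]
    have e2 : B (0, 1) = 0 := by
      have hgfd : HasFDerivAt (fun q => pdx ρ q * pdx ρ q - pdy ρ q * pdy ρ q)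
          ((pdx ρ p • A + pdx ρ p • A) - (pdy ρ p • B + pdy ρ p • B)) p :=
        (hA1.mul hA1).sub (hB1.mul hB1)
      have hgev : (fun q => pdx ρ q * pdx ρ q - pdy ρ q * pdy ρ q)
          =ᶠ[nhds p] fun _ => (-1 : ℝ) := by
        filter_upwards [hΩ.mem_nhds hp] with q hq
        linear_combination key q hq
      have h0 : ((pdx ρ p • A + pdx ρ p • A) - (pdy ρ p • B + pdy ρ p • B)) = 0 :=
        hgfd.unique ((hasFDerivAt_const (-1 : ℝ) p).congr_of_eventuallyEq hgev)
      have h01 := congrArg (fun L : (ℝ × ℝ) →L[ℝ] ℝ => L (0, 1)) h0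
      simp only [ContinuousLinearMap.sub_apply, ContinuousLinearMap.add_apply,
        ContinuousLinearMap.smul_apply, ContinuousLinearMap.zero_apply,
        smul_eq_mul] at h01
      rw [e1] at h01
      have h2 : pdy ρ p * B (0, 1) = 0 := by linarith only [h01]
      rcases mul_eq_zero.1 h2 with h | h
      · exact absurd h hvne
      · exact h
    -- e3 : A (1,0) = 0 from the box condition
    have e3 : A (1, 0) = 0 := by
      have h := hbox p hp
      rw [pdx_eq hA1.differentiableAt, hA1.fderiv,
        pdy_eq hB1.differentiableAt, hB1.fderiv, e2] at h
      linarith only [h]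
    have e4 : B (1, 0) = 0 := by rw [hBA]; exact e1
    exact ⟨by rw [hA1.fderiv]; exact clm_zero A e3 e1,
      by rw [hB1.fderiv]; exact clm_zero B e4 e2,
      hA1.differentiableAt, hB1.differentiableAt⟩
  -- constancy
  have hconstu : ∀ p ∈ Ω, ∀ q ∈ Ω, pdx ρ p = pdx ρ q :=
    const_on_open_preconn hΩ hΩconn.isPreconnected (pdx ρ)
      (fun p hp => (hzero p hp).2.2.1) (fun p hp => (hzero p hp).1)
  have hconstv : ∀ p ∈ Ω, ∀ q ∈ Ω, pdy ρ p = pdy ρ q :=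
    const_on_open_preconn hΩ hΩconn.isPreconnected (pdy ρ)
      (fun p hp => (hzero p hp).2.2.2) (fun p hp => (hzero p hp).2.1)
  refine ⟨fun p hp q hq => ⟨hconstu p hp q hq, hconstv p hp q hq⟩, key, ?_⟩
  obtain ⟨p0, hp0⟩ := hΩconn.nonempty
  obtain ⟨a, ha⟩ : ∃ a, pdx ρ p0 = a := ⟨_, rfl⟩
  obtain ⟨b, hb⟩ : ∃ b, pdy ρ p0 = b := ⟨_, rfl⟩
  have hab : a ^ 2 - b ^ 2 = -1 := by rw [← ha, ← hb]; exact key p0 hp0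
  have hb2 : b ^ 2 = 1 + a ^ 2 := by linarith only [hab]
  have hbne : b ≠ 0 := by
    intro h; rw [h] at hb2; norm_num at hb2; linarith only [hb2, sq_nonneg a]
  refine ⟨Real.arsinh a, if 0 < b then 1 else -1, ?_, ?_⟩
  · by_cases h : 0 < b <;> simp [h]
  · have hcosh : Real.cosh (Real.arsinh a) = |b| := by
      rw [Real.cosh_arsinh, ← hb2, Real.sqrt_sq_eq_abs]
    have hεb : (if 0 < b then (1 : ℝ) else -1) * Real.cosh (Real.arsinh a) = b := by
      rw [hcosh]
      by_cases h : 0 < b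
      · simp [h, abs_of_pos h]
      · push_neg at h
        have hneg : b < 0 := lt_of_le_of_ne h hbne
        simp [not_lt.2 h, abs_of_neg hneg]
    intro p hp
    refine ⟨?_, ?_⟩
    · rw [hconstu p hp p0 hp0, ha, Real.sinh_arsinh]
    · rw [hconstv p hp p0 hp0, hb, hεb]
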